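/- For every s ≥ 1 and r ≥ 1, the empirical Rademacher complexity of F_{s,r} satisfies R̂(F_{s,r}) = (2√R/(TN)) · E_σ[ sup_{θ ∈ ℝ^M, θ_m ≥ 0, ‖θ‖_r ≤ 1} ‖ ( √(Σ_{m=1}^M θ_m u_t^m) )_{t=1}^T ‖_{s*} ], where u_t^m = ‖Σ_{i=1}^N σ_t^i φ_{m,t}^i‖² (equivalently u_t^m = σ_t′ K_t^m σ_t with K_t^m the Gram matrix of φ_{m,t}^1,…,φ_{m,t}^N) and the ℓ_{s*} norm on ℝ^T is the maximum norm when s = 1. -/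

import Mathlib

open scoped BigOperators
open RealInnerProductSpace

noncomputable section

/-- The sign `+1`/`-1` associated with a Boolean, used to realize Rademacher variables. -/
def sgn (b : Bool) : ℝ := if b then 1 else -1

/-- Expectation over i.i.d. Rademacher variables `σ_t^i` (`t = 1,…,T`, `i = 1,…,N`),
realized as the uniform average over all sign patterns. -/
def Eσ (T N : ℕ) (f : (Fin T → Fin N → Bool) → ℝ) : ℝ :=
  (∑ σ : Fin T → Fin N → Bool, f σ) / (Fintype.card (Fin T → Fin N → Bool) : ℝ)

/-- Admissibility of a triple `(w, θ, λ)` for the multi-kernel hypothesis class `F_{s,r}`: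
`θ ⪰ 0` with `‖θ‖_r ≤ 1`, `λ ⪰ 0` with `‖λ‖_s ≤ 1`, and `Σ_m ‖w_t^m‖² ≤ λ_t² R` for all `t`. -/
def MKadm {M T : ℕ} (H : Fin M → Type*) [∀ m, NormedAddCommGroup (H m)]
    [∀ m, InnerProductSpace ℝ (H m)] (s r R : ℝ)
    (w : Fin T → ∀ m, H m) (θ : Fin M → ℝ) (lam : Fin T → ℝ) : Prop :=
  (∀ m, 0 ≤ θ m) ∧ (∑ m, θ m ^ r) ≤ 1 ∧
    (∀ t, 0 ≤ lam t) ∧ (∑ t, lam t ^ s) ≤ 1 ∧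
    ∀ t, (∑ m, ‖w t m‖ ^ 2) ≤ lam t ^ 2 * R

/-- Empirical Rademacher complexity of the multi-kernel hypothesis class `F_{s,r}`, with
respect to the sampled feature vectors `φ_{m,t}^i`. -/
def ERCmk {M : ℕ} (H : Fin M → Type*) [∀ m, NormedAddCommGroup (H m)]
    [∀ m, InnerProductSpace ℝ (H m)] (T N : ℕ)
    (φ : ∀ m, Fin T → Fin N → H m) (s r R : ℝ) : ℝ :=
  Eσ T N (fun σ => sSup {v : ℝ |
    ∃ (w : Fin T → ∀ m, H m) (θ : Fin M → ℝ) (lam : Fin T → ℝ),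
      MKadm H s r R w θ lam ∧
      v = (2 / ((T : ℝ) * N)) *
        ∑ t, ∑ i, sgn (σ t i) * ∑ m, Real.sqrt (θ m) * ⟪w t m, φ m t i⟫})

/-- The `ℓ_q` norm on `ℝ^T` for finite `0 < q < ∞`. -/
def lqNorm {T : ℕ} (q : ℝ) (u : Fin T → ℝ) : ℝ := (∑ t, |u t| ^ q) ^ (1 / q)

/-- The `ℓ_{s*}` norm on `ℝ^T`, where `s* = s/(s-1)` is the Hölder conjugate of `s ≥ 1`;
for `s = 1` this is the `ℓ_∞` (maximum) norm. -/
def dualNorm {T : ℕ} (s : ℝ) (u : Fin T → ℝ) : ℝ :=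
  if s = 1 then ⨆ t, |u t| else lqNorm (s / (s - 1)) u

/-!
Fix the signs and put `v_t^m = Σ_i σ_t^i φ_{m,t}^i`, so that the objective is
`Σ_t Σ_m √θ_m ⟪w_t^m, v_t^m⟫`. For fixed `θ` and `λ`, the `t`-th term is an inner product in the
`ℓ²`-sum of the spaces `H_m`, so Cauchy–Schwarz bounds it by `λ_t √R (Σ_m θ_m ‖v_t^m‖²)^{1/2}`,
with equality when `w_t` is a multiple of `(√θ_m v_t^m)_m`. Maximizing `Σ_t λ_t b_t` over the
nonnegative part of the unit `ℓ_s` ball gives the dual norm `‖b‖_{s*}`, by Hölder's inequality and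
its equality case. Since both suprema are attained, what is left is the supremum over `θ`.
-/

open Finset

section WeightedL2

variable {ι : Type*} [Fintype ι] {H : ι → Type*} [∀ i, NormedAddCommGroup (H i)]
  [∀ i, InnerProductSpace ℝ (H i)]

theorem exists_norm_le_real_inner_eq {E : Type*} [NormedAddCommGroup E] [InnerProductSpace ℝ E]
    (u : E) {c : ℝ} (hc : 0 ≤ c) : ∃ w : E, ‖w‖ ≤ c ∧ ⟪w, u⟫ = c * ‖u‖ := by
  rcases (norm_nonneg u).eq_or_lt with hu | hu
  · exact ⟨0, by simpa using hc, by simp [← hu]⟩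
  refine ⟨(c / ‖u‖) • u, ?_, ?_⟩
  · rw [norm_smul, Real.norm_eq_abs, abs_div, abs_of_nonneg hc, abs_norm,
      div_mul_cancel₀ c hu.ne']
  · rw [real_inner_smul_left, real_inner_self_eq_norm_sq]
    field_simp

theorem sum_mul_sum_mul_inner {κ : Type*} [Fintype κ] (c : κ → ℝ) (a : ι → ℝ) (w : ∀ i, H i)
    (φ : ∀ i, κ → H i) :
    ∑ k, c k * ∑ i, a i * ⟪w i, φ i k⟫ = ∑ i, a i * ⟪w i, ∑ k, c k • φ i k⟫ := by
  simp only [mul_sum, inner_sum, real_inner_smul_right]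
  rw [sum_comm]
  exact sum_congr rfl fun _ _ => sum_congr rfl fun _ _ => by ring

theorem inner_toLp_sqrt_smul (θ : ι → ℝ) (w v : ∀ i, H i) :
    ⟪WithLp.toLp 2 w, WithLp.toLp 2 fun i => √(θ i) • v i⟫ = ∑ i, √(θ i) * ⟪w i, v i⟫ := by
  simp [PiLp.inner_apply, real_inner_smul_right]

theorem norm_toLp_sqrt_smul {θ : ι → ℝ} (hθ : ∀ i, 0 ≤ θ i) (v : ∀ i, H i) :
    ‖WithLp.toLp 2 fun i => √(θ i) • v i‖ = √(∑ i, θ i * ‖v i‖ ^ 2) := by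
  simp [PiLp.norm_eq_of_L2, norm_smul, mul_pow, Real.sq_sqrt (hθ _)]

theorem sum_sqrt_mul_inner_le {θ : ι → ℝ} (hθ : ∀ i, 0 ≤ θ i) (w v : ∀ i, H i) :
    ∑ i, √(θ i) * ⟪w i, v i⟫ ≤ √(∑ i, ‖w i‖ ^ 2) * √(∑ i, θ i * ‖v i‖ ^ 2) := by
  rw [← inner_toLp_sqrt_smul, ← norm_toLp_sqrt_smul hθ,
    ← PiLp.norm_sq_eq_of_L2 H (WithLp.toLp 2 w), Real.sqrt_sq (norm_nonneg _)]
  exact real_inner_le_norm _ _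

theorem exists_sum_norm_sq_le_sum_sqrt_mul_inner_eq {θ : ι → ℝ} (hθ : ∀ i, 0 ≤ θ i)
    (v : ∀ i, H i) {c : ℝ} (hc : 0 ≤ c) :
    ∃ w : ∀ i, H i, ∑ i, ‖w i‖ ^ 2 ≤ c ^ 2 ∧
      ∑ i, √(θ i) * ⟪w i, v i⟫ = c * √(∑ i, θ i * ‖v i‖ ^ 2) := by
  obtain ⟨w, hw, hinner⟩ := exists_norm_le_real_inner_eq (WithLp.toLp 2 fun i => √(θ i) • v i) hc
  refine ⟨w.ofLp, ?_, ?_⟩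
  · rw [← PiLp.norm_sq_eq_of_L2 H w]
    exact pow_le_pow_left₀ (norm_nonneg _) hw 2
  · rw [← inner_toLp_sqrt_smul, ← norm_toLp_sqrt_smul hθ, WithLp.toLp_ofLp, hinner]

end WeightedL2

section HolderDuality

variable {T : ℕ}

theorem sum_mul_le_iSup_abs {lam : Fin T → ℝ} (hlam : ∀ t, 0 ≤ lam t) (hsum : ∑ t, lam t ≤ 1)
    (b : Fin T → ℝ) : ∑ t, lam t * b t ≤ ⨆ t, |b t| := by
  have hbdd : BddAbove (Set.range fun t => |b t|) := (Set.finite_range _).bddAbove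
  calc ∑ t, lam t * b t ≤ ∑ t, lam t * ⨆ t, |b t| :=
        sum_le_sum fun t _ =>
          mul_le_mul_of_nonneg_left ((le_abs_self _).trans (le_ciSup hbdd t)) (hlam t)
    _ = (∑ t, lam t) * ⨆ t, |b t| := by rw [sum_mul]
    _ ≤ ⨆ t, |b t| := mul_le_of_le_one_left (Real.iSup_nonneg fun t => abs_nonneg _) hsum

theorem exists_sum_mul_eq_iSup_abs {b : Fin T → ℝ} (hb : ∀ t, 0 ≤ b t) :
    ∃ lam : Fin T → ℝ, (∀ t, 0 ≤ lam t) ∧ ∑ t, lam t ≤ 1 ∧ ∑ t, lam t * b t = ⨆ t, |b t| := by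
  cases isEmpty_or_nonempty (Fin T)
  · exact ⟨0, fun _ => le_rfl, by simp, by simp⟩
  obtain ⟨t₀, ht₀⟩ := Finite.exists_max b
  have hmax : b t₀ = ⨆ t, |b t| := by
    refine le_antisymm ?_ (ciSup_le fun t => (abs_of_nonneg (hb t)).trans_le (ht₀ t))
    exact (le_abs_self _).trans (le_ciSup (f := fun t => |b t|) (Set.finite_range _).bddAbove t₀)
  exact ⟨Pi.single t₀ 1, fun t => by rw [Pi.single_apply]; positivity,
    by simp, by simp [Pi.single_apply, hmax]⟩

theorem lqNorm_nonneg (q : ℝ) (b : Fin T → ℝ) : 0 ≤ lqNorm q b :=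
  Real.rpow_nonneg (sum_nonneg fun _ _ => Real.rpow_nonneg (abs_nonneg _) _) _

theorem lqNorm_rpow {q : ℝ} (hq : q ≠ 0) {b : Fin T → ℝ} (hb : ∀ t, 0 ≤ b t) :
    lqNorm q b ^ q = ∑ t, b t ^ q := by
  rw [lqNorm, ← Real.rpow_mul (sum_nonneg fun _ _ => Real.rpow_nonneg (abs_nonneg _) _),
    one_div_mul_cancel hq, Real.rpow_one]
  simp only [abs_of_nonneg (hb _)]

theorem sum_mul_le_lqNorm {p q : ℝ} (hpq : p.HolderConjugate q) {lam : Fin T → ℝ}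
    (hlam : ∀ t, 0 ≤ lam t) (hsum : ∑ t, lam t ^ p ≤ 1) (b : Fin T → ℝ) :
    ∑ t, lam t * b t ≤ lqNorm q b := by
  calc ∑ t, lam t * b t ≤ (∑ t, |lam t| ^ p) ^ (1 / p) * lqNorm q b :=
        Real.inner_le_Lp_mul_Lq _ _ _ hpq
    _ ≤ 1 * lqNorm q b := by
        gcongr
        · exact lqNorm_nonneg q b
        · simp only [abs_of_nonneg (hlam _)]
          exact Real.rpow_le_one (sum_nonneg fun t _ => Real.rpow_nonneg (hlam t) p) hsum
            hpq.one_div_nonneg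
    _ = lqNorm q b := one_mul _

theorem exists_sum_mul_eq_lqNorm {p q : ℝ} (hpq : p.HolderConjugate q) {b : Fin T → ℝ}
    (hb : ∀ t, 0 ≤ b t) :
    ∃ lam : Fin T → ℝ, (∀ t, 0 ≤ lam t) ∧ ∑ t, lam t ^ p ≤ 1 ∧
      ∑ t, lam t * b t = lqNorm q b := by
  set B := lqNorm q b
  rcases (lqNorm_nonneg q b).eq_or_lt with hB | hB
  · exact ⟨0, fun _ => le_rfl, by simp [Real.zero_rpow hpq.ne_zero], by simpa using hB⟩
  have hBq : B ^ q = ∑ t, b t ^ q := lqNorm_rpow hpq.symm.ne_zero hb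
  -- the extremal weights of Hölder's inequality
  refine ⟨fun t => (b t / B) ^ (q - 1), fun t => by have := hb t; positivity, le_of_eq ?_, ?_⟩
  · calc ∑ t, ((b t / B) ^ (q - 1)) ^ p = ∑ t, b t ^ q / B ^ q := by
          refine sum_congr rfl fun t _ => ?_
          rw [← Real.rpow_mul (div_nonneg (hb t) hB.le), hpq.symm.sub_one_mul_conj,
            Real.div_rpow (hb t) hB.le]
      _ = 1 := by rw [← sum_div, hBq, div_self (hBq ▸ (Real.rpow_pos_of_pos hB q).ne')]
  · calc ∑ t, (b t / B) ^ (q - 1) * b t = ∑ t, b t ^ q / B ^ (q - 1) := by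
          refine sum_congr rfl fun t _ => ?_
          rw [Real.div_rpow (hb t) hB.le, div_mul_eq_mul_div,
            ← Real.rpow_add_one' (hb t) (by simpa using hpq.symm.ne_zero), sub_add_cancel]
      _ = B := by
          rw [← sum_div, ← hBq, ← Real.rpow_sub hB, sub_sub_cancel, Real.rpow_one]

theorem sum_mul_le_dualNorm {s : ℝ} (hs : 1 ≤ s) {lam : Fin T → ℝ} (hlam : ∀ t, 0 ≤ lam t)
    (hsum : ∑ t, lam t ^ s ≤ 1) (b : Fin T → ℝ) : ∑ t, lam t * b t ≤ dualNorm s b := by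
  unfold dualNorm
  split_ifs with h1
  · subst h1
    exact sum_mul_le_iSup_abs hlam (by simpa using hsum) b
  · exact sum_mul_le_lqNorm ((Real.holderConjugate_iff_eq_conjExponent
      (hs.lt_of_ne (Ne.symm h1))).2 rfl) hlam hsum b

theorem exists_sum_mul_eq_dualNorm {s : ℝ} (hs : 1 ≤ s) {b : Fin T → ℝ} (hb : ∀ t, 0 ≤ b t) :
    ∃ lam : Fin T → ℝ, (∀ t, 0 ≤ lam t) ∧ ∑ t, lam t ^ s ≤ 1 ∧
      ∑ t, lam t * b t = dualNorm s b := by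
  unfold dualNorm
  split_ifs with h1
  · subst h1
    simpa using exists_sum_mul_eq_iSup_abs hb
  · exact exists_sum_mul_eq_lqNorm ((Real.holderConjugate_iff_eq_conjExponent
      (hs.lt_of_ne (Ne.symm h1))).2 rfl) hb

end HolderDuality

section MultiKernel

variable {M T : ℕ} {H : Fin M → Type*} [∀ m, NormedAddCommGroup (H m)]
  [∀ m, InnerProductSpace ℝ (H m)] {s r R : ℝ}

theorem sum_sum_sqrt_mul_inner_le_of_mkadm (hs : 1 ≤ s) {w : Fin T → ∀ m, H m}
    {θ : Fin M → ℝ} {lam : Fin T → ℝ} (hadm : MKadm H s r R w θ lam) (v : Fin T → ∀ m, H m) :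
    ∑ t, ∑ m, √(θ m) * ⟪w t m, v t m⟫ ≤
      √R * dualNorm s (fun t => √(∑ m, θ m * ‖v t m‖ ^ 2)) := by
  obtain ⟨hθ, -, hlam, hlam_s, hw⟩ := hadm
  have hw_norm (t : Fin T) : √(∑ m, ‖w t m‖ ^ 2) ≤ lam t * √R := by
    calc √(∑ m, ‖w t m‖ ^ 2) ≤ √(lam t ^ 2 * R) := Real.sqrt_le_sqrt (hw t)
      _ = lam t * √R := by rw [Real.sqrt_mul (sq_nonneg _), Real.sqrt_sq (hlam t)]
  calc ∑ t, ∑ m, √(θ m) * ⟪w t m, v t m⟫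
      ≤ ∑ t, lam t * √R * √(∑ m, θ m * ‖v t m‖ ^ 2) :=
        sum_le_sum fun t _ => (sum_sqrt_mul_inner_le hθ (w t) (v t)).trans
          (mul_le_mul_of_nonneg_right (hw_norm t) (Real.sqrt_nonneg _))
    _ = √R * ∑ t, lam t * √(∑ m, θ m * ‖v t m‖ ^ 2) := by
        rw [mul_sum]
        exact sum_congr rfl fun _ _ => by ring
    _ ≤ √R * dualNorm s (fun t => √(∑ m, θ m * ‖v t m‖ ^ 2)) :=
        mul_le_mul_of_nonneg_left (sum_mul_le_dualNorm hs hlam hlam_s _) (Real.sqrt_nonneg R)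

theorem exists_mkadm_sum_sum_sqrt_mul_inner_eq (hs : 1 ≤ s) (hR : 0 ≤ R) {θ : Fin M → ℝ}
    (hθ : ∀ m, 0 ≤ θ m) (hθr : ∑ m, θ m ^ r ≤ 1) (v : Fin T → ∀ m, H m) :
    ∃ (w : Fin T → ∀ m, H m) (lam : Fin T → ℝ), MKadm H s r R w θ lam ∧
      ∑ t, ∑ m, √(θ m) * ⟪w t m, v t m⟫ =
        √R * dualNorm s (fun t => √(∑ m, θ m * ‖v t m‖ ^ 2)) := by
  obtain ⟨lam, hlam, hlam_s, hlam_eq⟩ := exists_sum_mul_eq_dualNorm hs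
    (b := fun t => √(∑ m, θ m * ‖v t m‖ ^ 2)) fun _ => Real.sqrt_nonneg _
  choose w hw hw_eq using fun t => exists_sum_norm_sq_le_sum_sqrt_mul_inner_eq hθ (v t)
    (mul_nonneg (hlam t) (Real.sqrt_nonneg R))
  refine ⟨w, lam, ⟨hθ, hθr, hlam, hlam_s, fun t => (hw t).trans_eq ?_⟩, ?_⟩
  · rw [mul_pow, Real.sq_sqrt hR]
  · rw [← hlam_eq, mul_sum]
    exact sum_congr rfl fun t _ => by rw [hw_eq]; ring

theorem sSup_mkadm_objective_eq {N : ℕ} (hs : 1 ≤ s) (hR : 0 ≤ R)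
    (φ : ∀ m, Fin T → Fin N → H m) (c : Fin T → Fin N → ℝ) {K : ℝ} (hK : 0 ≤ K) :
    sSup {x : ℝ | ∃ (w : Fin T → ∀ m, H m) (θ : Fin M → ℝ) (lam : Fin T → ℝ),
        MKadm H s r R w θ lam ∧
        x = K * ∑ t, ∑ i, c t i * ∑ m, √(θ m) * ⟪w t m, φ m t i⟫} =
      K * √R * sSup {x : ℝ | ∃ θ : Fin M → ℝ, (∀ m, 0 ≤ θ m) ∧ (∑ m, θ m ^ r) ≤ 1 ∧
        x = dualNorm s (fun t => √(∑ m, θ m * ‖∑ i, c t i • φ m t i‖ ^ 2))} := by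
  rw [← smul_eq_mul (K * √R), ← Real.sSup_smul_of_nonneg (by positivity)]
  simp only [sum_mul_sum_mul_inner]
  apply csSup_eq_csSup_of_forall_exists_le
  · rintro _ ⟨w, θ, lam, hadm, rfl⟩
    refine ⟨_, Set.smul_mem_smul_set ⟨θ, hadm.1, hadm.2.1, rfl⟩, ?_⟩
    rw [smul_eq_mul, mul_assoc]
    exact mul_le_mul_of_nonneg_left (sum_sum_sqrt_mul_inner_le_of_mkadm hs hadm _) hK
  · rintro _ ⟨_, ⟨θ, hθ, hθr, rfl⟩, rfl⟩
    obtain ⟨w, lam, hadm, heq⟩ :=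
      exists_mkadm_sum_sum_sqrt_mul_inner_eq hs hR hθ hθr fun t m => ∑ i, c t i • φ m t i
    refine ⟨_, ⟨w, θ, lam, hadm, rfl⟩, le_of_eq ?_⟩
    rw [heq]
    simp only [smul_eq_mul, mul_assoc]

end MultiKernel

theorem Eσ_const_mul (T N : ℕ) (k : ℝ) (f : (Fin T → Fin N → Bool) → ℝ) :
    Eσ T N (fun σ => k * f σ) = k * Eσ T N f := by
  rw [Eσ, Eσ, ← mul_sum, mul_div_assoc]

theorem ercmk_eq_general {M : ℕ} (H : Fin M → Type*) [∀ m, NormedAddCommGroup (H m)]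
    [∀ m, InnerProductSpace ℝ (H m)]
    (T N : ℕ) (R : ℝ) (hR : 0 < R)
    (φ : ∀ m, Fin T → Fin N → H m) (s r : ℝ) (hs : 1 ≤ s) :
    ERCmk H T N φ s r R =
      (2 * Real.sqrt R / ((T : ℝ) * N)) *
        Eσ T N (fun σ => sSup {v : ℝ | ∃ θ : Fin M → ℝ,
          (∀ m, 0 ≤ θ m) ∧ (∑ m, θ m ^ r) ≤ 1 ∧
          v = dualNorm s (fun t =>
            Real.sqrt (∑ m, θ m * ‖∑ i, sgn (σ t i) • φ m t i‖ ^ 2))}) := by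
  rw [ERCmk, mul_div_right_comm, ← Eσ_const_mul]
  exact congrArg (Eσ T N) <| funext fun σ =>
    sSup_mkadm_objective_eq hs hR.le φ (fun t i => sgn (σ t i)) (by positivity)

/-- For every `s ≥ 1` and `r ≥ 1`,
`R̂(F_{s,r}) = (2√R/(TN)) E_σ sup_{θ ⪰ 0, ‖θ‖_r ≤ 1} ‖(√(θ'u_t))_t‖_{s*}`, where
`u_t^m = ‖Σ_i σ_t^i φ_{m,t}^i‖²`. -/
theorem ercmk_eq {M : ℕ} (H : Fin M → Type*) [∀ m, NormedAddCommGroup (H m)]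
    [∀ m, InnerProductSpace ℝ (H m)]
    (T N : ℕ) (hT : 0 < T) (hN : 0 < N) (hM : 0 < M) (R : ℝ) (hR : 0 < R)
    (φ : ∀ m, Fin T → Fin N → H m) (s r : ℝ) (hs : 1 ≤ s) (hr : 1 ≤ r) :
    ERCmk H T N φ s r R =
      (2 * Real.sqrt R / ((T : ℝ) * N)) *
        Eσ T N (fun σ => sSup {v : ℝ | ∃ θ : Fin M → ℝ,
          (∀ m, 0 ≤ θ m) ∧ (∑ m, θ m ^ r) ≤ 1 ∧
          v = dualNorm s (fun t =>
            Real.sqrt (∑ m, θ m * ‖∑ i, sgn (σ t i) • φ m t i‖ ^ 2))}) :=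
  ercmk_eq_general H T N R hR φ s r hs

end
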